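/- Let f : ℝⁿ → ℝ be C² semi-algebraic, ω(x) = 1 + ‖x‖²/2, and k ∈ ℕ such that |f(x)| > 1/ω(x)^k for all x ∈ Γ_{f,ω} \ f⁻¹(0) with ω(x) large. Set g_-(x) = f(x) - 1/ω(x)^k. Then the set (∇g_-)⁻¹(0) ∩ {g_- = 0} is compact. -/

import Mathlib

/-!
If `g(x) = f(x) - ω(x)⁻ᵏ` vanishes together with its gradient at `x`, then `f(x) = ω(x)⁻ᵏ ≠ 0`,
and since `ω⁻ᵏ` is a radial function its gradient is a multiple of `x`, hence so is `∇f(x)`: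
`x ∈ Γ_{f,ω} \ f⁻¹(0)` with `|f(x)| = ω(x)⁻ᵏ`, which the hypothesis forbids once `ω(x)` is large.
So the set lies in a ball; it is closed because `g` is `C¹`.
-/

open InnerProductSpace

variable {F : Type*} [NormedAddCommGroup F] [InnerProductSpace ℝ F] [CompleteSpace F]

theorem HasDerivAt.hasGradientAt_comp_norm_sq {φ : ℝ → ℝ} {φ' : ℝ} {x : F}
    (hφ : HasDerivAt φ φ' (‖x‖ ^ 2)) :
    HasGradientAt (fun y => φ (‖y‖ ^ 2)) ((2 * φ') • x) x := by
  rw [hasGradientAt_iff_hasFDerivAt]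
  refine (hφ.comp_hasFDerivAt x (hasStrictFDerivAt_norm_sq x).hasFDerivAt).congr_fderiv ?_
  ext y
  simp only [smul_apply, coe_innerSL_apply, nsmul_eq_mul, Nat.cast_ofNat,
    smul_eq_mul, map_smul, toDual_apply_apply]
  ring

omit [CompleteSpace F] in
theorem not_linearIndependent_smul_pair (c : ℝ) (x : F) : ¬ LinearIndependent ℝ ![c • x, x] :=
  fun h => one_ne_zero (LinearIndependent.pair_iff.mp h 1 (-c) (by module)).1

theorem ContDiff.continuous_gradient {g : F → ℝ} (hg : ContDiff ℝ 1 g) :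
    Continuous (gradient g) :=
  (toDual ℝ F).symm.continuous.comp (hg.continuous_fderiv one_ne_zero)

theorem not_linearIndependent_gradient_of_gradient_sub_comp_norm_sq_eq_zero
    {f : F → ℝ} {φ : ℝ → ℝ} {x : F} (hf : DifferentiableAt ℝ f x)
    (hφ : DifferentiableAt ℝ φ (‖x‖ ^ 2))
    (h : gradient (fun y => f y - φ (‖y‖ ^ 2)) x = 0) :
    ¬ LinearIndependent ℝ ![gradient f x, x] := by
  have hsub : HasGradientAt (fun y => f y - φ (‖y‖ ^ 2))
      (gradient f x - (2 * deriv φ (‖x‖ ^ 2)) • x) x := by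
    rw [hasGradientAt_iff_hasFDerivAt, map_sub]
    exact hf.hasGradientAt.hasFDerivAt.sub hφ.hasDerivAt.hasGradientAt_comp_norm_sq.hasFDerivAt
  rw [hsub.gradient, sub_eq_zero] at h
  exact h ▸ not_linearIndependent_smul_pair _ x

/-- If `f` is `C²`, `ω(x) = 1 + ‖x‖²/2`, `k ∈ ℕ` is such that `|f(x)| > 1/ω(x)ᵏ` for all
`x ∈ Γ_{f,ω} \ f⁻¹(0)` with `ω(x)` large, and `g₋(x) = f(x) - 1/ω(x)ᵏ`, then
`(∇g₋)⁻¹(0) ∩ {g₋ = 0}` is compact. -/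
theorem stmt9 (n k : ℕ) (f g : EuclideanSpace ℝ (Fin n) → ℝ)
    (hf : ContDiff ℝ 2 f)
    (hg : ∀ x, g x = f x - 1 / (1 + ‖x‖ ^ 2 / 2) ^ k)
    (hbound : ∃ R : ℝ, ∀ x : EuclideanSpace ℝ (Fin n),
      ¬ LinearIndependent ℝ ![gradient f x, x] → f x ≠ 0 →
      R ≤ 1 + ‖x‖ ^ 2 / 2 → 1 / (1 + ‖x‖ ^ 2 / 2) ^ k < |f x|) :
    IsCompact {x : EuclideanSpace ℝ (Fin n) | gradient g x = 0 ∧ g x = 0} := by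
  obtain ⟨R, hR⟩ := hbound
  set φ : ℝ → ℝ := fun t => 1 / (1 + t / 2) ^ k
  have hg_eq : g = fun y => f y - φ (‖y‖ ^ 2) := funext hg
  have hg_smooth : ContDiff ℝ 1 g := by
    rw [hg_eq]
    exact (hf.of_le one_le_two).sub <| contDiff_const.div
      ((contDiff_const.add ((contDiff_norm_sq ℝ).div_const 2)).pow k) fun x => by positivity
  have hclosed : IsClosed {x | gradient g x = 0 ∧ g x = 0} :=
    (isClosed_singleton.preimage hg_smooth.continuous_gradient).inter
      (isClosed_singleton.preimage hg_smooth.continuous)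
  refine Metric.isCompact_of_isClosed_isBounded hclosed
    ((Metric.isBounded_ball (x := 0) (r := R)).subset fun x ⟨hgrad, hzero⟩ => ?_)
  have hfx : f x = 1 / (1 + ‖x‖ ^ 2 / 2) ^ k := by linarith [hg x]
  have hfx_pos : 0 < f x := hfx ▸ by positivity
  have hφ : DifferentiableAt ℝ φ (‖x‖ ^ 2) := by
    have : (1 + ‖x‖ ^ 2 / 2) ^ k ≠ 0 := by positivity
    fun_prop (disch := exact this)
  have hdep : ¬ LinearIndependent ℝ ![gradient f x, x] :=
    not_linearIndependent_gradient_of_gradient_sub_comp_norm_sq_eq_zero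
      (hf.differentiable two_ne_zero x) hφ (by rwa [hg_eq] at hgrad)
  have hω : 1 + ‖x‖ ^ 2 / 2 < R := by
    by_contra! hle
    have := hR x hdep hfx_pos.ne' hle
    rw [abs_of_pos hfx_pos, hfx] at this
    exact lt_irrefl _ this
  rw [mem_ball_zero_iff]
  nlinarith [sq_nonneg (‖x‖ - 1)]
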